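/- arXiv:2412.19822 — 2 statements merged into one kernel-verified Lean document; each statement's English description precedes it below -/
import Mathlib

section
/- Let N be an odd positive integer and let λ_0, …, λ_N be pairwise distinct positive real numbers. Assume Φ_N^{(j)}(x) ≥ 0 for every real x > 0 and every integer j ≥ 0. Then for every x ∈ [0,1], every nonnegative integer k with 2k+1 ≤ N, and every vector p = (p_0, …, p_k) ∈ ℝ^{k+1}, one has Σ_{i=0}^{k} Σ_{j=0}^{k} p_i p_j (b_{i+j}(x) − b_{i+j+1}(x)) ≥ 0. -/
/-!
Taylor's formula with integral remainder for `Φ^{(N-m)}` at `0`, where all derivatives of `Φ` of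
order below `N` vanish, gives `b_m(x) = x^m + ∫_0^x (x-u)^m Φ^{(N+1)}(u) du` for `m ≤ N`. Hence
`b_m(x) - b_{m+1}(x) = x^m (1-x) + ∫_0^x (x-u)^m (1-(x-u)) Φ^{(N+1)}(u) du` is a moment sequence
of a nonnegative weight, and the quadratic form equals
`(Σ p_i x^i)² (1-x) + ∫_0^x (Σ p_i (x-u)^i)² (1-(x-u)) Φ^{(N+1)}(u) du ≥ 0`.
-/

open Finset intervalIntegral Set
open scoped Nat ContDiff Interval

theorem contDiff_of_mem_span {𝕜 E F : Type*} [NontriviallyNormedField 𝕜]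
    [NormedAddCommGroup E] [NormedSpace 𝕜 E] [NormedAddCommGroup F] [NormedSpace 𝕜 F]
    {n : WithTop ℕ∞} {S : Set (E → F)} (hS : ∀ f ∈ S, ContDiff 𝕜 n f) {f : E → F}
    (hf : f ∈ Submodule.span 𝕜 S) : ContDiff 𝕜 n f := by
  induction hf using Submodule.span_induction with
  | mem f hf => exact hS f hf
  | zero => exact contDiff_const
  | add f g _ _ hf hg => exact hf.add hg
  | smul c f _ hf => exact hf.const_smul c

theorem taylor_integral_remainder_iteratedDeriv {f : ℝ → ℝ} {n : ℕ}
    (hf : ContDiff ℝ (n + 1 : ℕ) f) (x₀ x : ℝ) :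
    f x = ∑ k ∈ range (n + 1), iteratedDeriv k f x₀ / k ! * (x - x₀) ^ k
      + ∫ t in x₀..x, (x - t) ^ n / n ! * iteratedDeriv (n + 1) f t := by
  rcases eq_or_ne x₀ x with rfl | hne
  · simp [Finset.sum_range_succ']
  have hs : UniqueDiffOn ℝ [[x₀, x]] := uniqueDiffOn_uIcc hne
  have hwithin : ∀ k ≤ n + 1, EqOn (iteratedDerivWithin k f [[x₀, x]]) (iteratedDeriv k f)
      [[x₀, x]] := fun k hk t ht =>
    iteratedDerivWithin_eq_iteratedDeriv hs (hf.contDiffAt.of_le (by exact_mod_cast hk)) ht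
  have key := taylor_integral_remainder (x₀ := x₀) (x := x) hf.contDiffOn
  rw [taylor_within_apply, sub_eq_iff_eq_add'] at key
  rw [key, integral_congr fun t ht => congrArg _ (hwithin (n + 1) le_rfl ht)]
  congr 1
  refine sum_congr rfl fun k hk => ?_
  rw [hwithin k (by simp at hk; omega) left_mem_uIcc, smul_eq_mul]
  ring

theorem iteratedDeriv_iteratedDeriv {𝕜 F : Type*} [NontriviallyNormedField 𝕜]
    [NormedAddCommGroup F] [NormedSpace 𝕜 F] {f : 𝕜 → F} (k n : ℕ) :
    iteratedDeriv k (iteratedDeriv n f) = iteratedDeriv (k + n) f := by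
  simp only [iteratedDeriv_eq_iterate, Function.iterate_add_apply]

section FundamentalFunction

variable {Φ : ℝ → ℝ} {N : ℕ} (hΦ : ContDiff ℝ ∞ Φ) (hΦ0 : ∀ j < N, iteratedDeriv j Φ 0 = 0)
  (hΦN : iteratedDeriv N Φ 0 = 1)
include hΦ hΦ0 hΦN

theorem factorial_mul_iteratedDeriv_sub_eq_pow_add_integral {m : ℕ} (hm : m ≤ N) (x : ℝ) :
    m ! * iteratedDeriv (N - m) Φ x
      = x ^ m + ∫ u in (0 : ℝ)..x, (x - u) ^ m * iteratedDeriv (N + 1) Φ u := by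
  have hf : ContDiff ℝ (m + 1 : ℕ) (iteratedDeriv (N - m) Φ) := by
    rw [iteratedDeriv_eq_iterate]
    exact (hΦ.iterate_deriv _).of_le (by exact_mod_cast le_top)
  have hlower : ∀ k ∈ range m,
      iteratedDeriv k (iteratedDeriv (N - m) Φ) 0 / k ! * (x - 0) ^ k = 0 := fun k hk => by
    rw [iteratedDeriv_iteratedDeriv, hΦ0 _ (by simp at hk; omega), zero_div, zero_mul]
  rw [taylor_integral_remainder_iteratedDeriv hf 0 x, sum_range_succ, sum_eq_zero hlower,
    iteratedDeriv_iteratedDeriv, iteratedDeriv_iteratedDeriv, Nat.add_sub_cancel' hm, hΦN,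
    show m + 1 + (N - m) = N + 1 by omega]
  simp only [div_mul_eq_mul_div, integral_div, sub_zero, zero_add, one_mul]
  field_simp

theorem factorial_mul_iteratedDeriv_sub_sub_eq_pow_mul_add_integral {m : ℕ} (hm : m + 1 ≤ N)
    (x : ℝ) :
    m ! * iteratedDeriv (N - m) Φ x - (m + 1) ! * iteratedDeriv (N - (m + 1)) Φ x
      = x ^ m * (1 - x)
        + ∫ u in (0 : ℝ)..x, (x - u) ^ m * ((1 - (x - u)) * iteratedDeriv (N + 1) Φ u) := by
  have hg : Continuous (iteratedDeriv (N + 1) Φ) :=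
    hΦ.continuous_iteratedDeriv _ (by exact_mod_cast le_top)
  rw [factorial_mul_iteratedDeriv_sub_eq_pow_add_integral hΦ hΦ0 hΦN (by omega),
    factorial_mul_iteratedDeriv_sub_eq_pow_add_integral hΦ hΦ0 hΦN hm, add_sub_add_comm,
    ← integral_sub (Continuous.intervalIntegrable (by fun_prop) _ _)
      (Continuous.intervalIntegrable (by fun_prop) _ _)]
  congr 1
  · ring
  · exact integral_congr fun u _ => by ring

end FundamentalFunction

theorem sum_sum_mul_mul_mul_eq_sq_mul {ι R : Type*} [CommSemiring R] (s : Finset ι)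
    (p a : ι → R) (c : R) :
    ∑ i ∈ s, ∑ j ∈ s, p i * p j * (a i * a j * c) = (∑ i ∈ s, p i * a i) ^ 2 * c := by
  rw [sq, sum_mul_sum, sum_mul]
  refine sum_congr rfl fun i _ => ?_
  rw [sum_mul]
  exact sum_congr rfl fun j _ => by ring

theorem sum_sum_mul_integral_mul_mul_nonneg {ι : Type*} {a b : ℝ} (hab : a ≤ b)
    {v : ι → ℝ → ℝ} {w : ℝ → ℝ} (hv : ∀ i, Continuous (v i)) (hw : Continuous w)
    (hw0 : ∀ u ∈ Icc a b, 0 ≤ w u) (s : Finset ι) (p : ι → ℝ) :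
    0 ≤ ∑ i ∈ s, ∑ j ∈ s, p i * p j * ∫ u in a..b, v i u * v j u * w u := by
  have hcont : ∀ i j, Continuous fun u => p i * p j * (v i u * v j u * w u) := fun i j =>
    continuous_const.mul (((hv i).mul (hv j)).mul hw)
  calc 0 ≤ ∫ u in a..b, (∑ i ∈ s, p i * v i u) ^ 2 * w u :=
        integral_nonneg hab fun u hu => mul_nonneg (sq_nonneg _) (hw0 u hu)
    _ = _ := by
      simp only [← sum_sum_mul_mul_mul_eq_sq_mul, ← integral_const_mul]
      rw [integral_finsetSum fun i _ =>
        (continuous_finsetSum _ fun j _ => hcont i j).intervalIntegrable _ _]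
      exact sum_congr rfl fun i _ =>
        integral_finsetSum fun j _ => (hcont i j).intervalIntegrable _ _

theorem hankel_difference_quadratic_form_nonneg_general
    (N : ℕ)
    (l : Fin (N + 1) → ℝ)
    (Φ : ℝ → ℝ)
    (hΦmem : Φ ∈ Submodule.span ℝ
        (Set.range (fun j : Fin (N + 1) => fun x : ℝ => Real.exp (l j * x))))
    (hΦ0 : ∀ j < N, iteratedDeriv j Φ 0 = 0)
    (hΦN : iteratedDeriv N Φ 0 = 1)
    (hΦnonneg : ∀ x : ℝ, 0 < x → ∀ j : ℕ, 0 ≤ iteratedDeriv j Φ x)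
    (b : ℕ → ℝ → ℝ)
    (hb : ∀ j ≤ N, b j = fun x => (Nat.factorial j : ℝ) * iteratedDeriv (N - j) Φ x) :
    ∀ x ∈ Set.Icc (0 : ℝ) 1, ∀ k : ℕ, 2 * k + 1 ≤ N → ∀ p : Fin (k + 1) → ℝ,
      0 ≤ ∑ i : Fin (k + 1), ∑ j : Fin (k + 1),
        p i * p j * (b ((i : ℕ) + (j : ℕ)) x - b ((i : ℕ) + (j : ℕ) + 1) x) := by
  intro x ⟨hx0, hx1⟩ k hk p
  have hΦ : ContDiff ℝ ∞ Φ := contDiff_of_mem_span (by rintro _ ⟨j, rfl⟩; fun_prop) hΦmem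
  have hg : Continuous (iteratedDeriv (N + 1) Φ) :=
    hΦ.continuous_iteratedDeriv _ (by exact_mod_cast le_top)
  have hg0 : ∀ u ∈ Ici (0 : ℝ), 0 ≤ iteratedDeriv (N + 1) Φ u := by
    rw [← closure_Ioi]
    exact (isClosed_le continuous_const hg).closure_subset_iff.mpr fun v hv => hΦnonneg v hv _
  have hdiff : ∀ i j : Fin (k + 1), b (i + j) x - b (i + j + 1) x
      = x ^ (i : ℕ) * x ^ (j : ℕ) * (1 - x) + ∫ u in (0 : ℝ)..x,
          (x - u) ^ (i : ℕ) * (x - u) ^ (j : ℕ) * ((1 - (x - u)) * iteratedDeriv (N + 1) Φ u) := by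
    intro i j
    rw [hb _ (by omega), hb _ (by omega)]
    simp only [factorial_mul_iteratedDeriv_sub_sub_eq_pow_mul_add_integral hΦ hΦ0 hΦN
      (by omega : (i : ℕ) + j + 1 ≤ N), pow_add]
  simp only [hdiff, mul_add, sum_add_distrib, sum_sum_mul_mul_mul_eq_sq_mul]
  exact add_nonneg (mul_nonneg (sq_nonneg _) (by linarith))
    (sum_sum_mul_integral_mul_mul_nonneg hx0 (fun i => by fun_prop) (by fun_prop)
      (fun u hu => mul_nonneg (by linarith [hu.1]) (hg0 u hu.1)) _ _)

/-- Under the nonnegativity assumption on all derivatives of `Φ_N` on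
`(0, ∞)`, for every `x ∈ [0,1]`, every `k` with `2k+1 ≤ N` and every `p ∈ ℝ^{k+1}`,
`Σ_{i,j=0}^{k} p_i p_j (b_{i+j}(x) − b_{i+j+1}(x)) ≥ 0`. -/
theorem hankel_difference_quadratic_form_nonneg
    (N : ℕ) (hN : 0 < N) (hNodd : Odd N)
    (l : Fin (N + 1) → ℝ) (hl : Function.Injective l) (hlpos : ∀ j, 0 < l j)
    (Φ : ℝ → ℝ)
    (hΦmem : Φ ∈ Submodule.span ℝ
        (Set.range (fun j : Fin (N + 1) => fun x : ℝ => Real.exp (l j * x))))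
    (hΦ0 : ∀ j < N, iteratedDeriv j Φ 0 = 0)
    (hΦN : iteratedDeriv N Φ 0 = 1)
    (hΦnonneg : ∀ x : ℝ, 0 < x → ∀ j : ℕ, 0 ≤ iteratedDeriv j Φ x)
    (b : ℕ → ℝ → ℝ)
    (hb : ∀ j ≤ N, b j = fun x => (Nat.factorial j : ℝ) * iteratedDeriv (N - j) Φ x) :
    ∀ x ∈ Set.Icc (0 : ℝ) 1, ∀ k : ℕ, 2 * k + 1 ≤ N → ∀ p : Fin (k + 1) → ℝ,
      0 ≤ ∑ i : Fin (k + 1), ∑ j : Fin (k + 1),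
        p i * p j * (b ((i : ℕ) + (j : ℕ)) x - b ((i : ℕ) + (j : ℕ) + 1) x) :=
  hankel_difference_quadratic_form_nonneg_general N l Φ hΦmem hΦ0 hΦN hΦnonneg b hb
end

section
/- Let N ≥ 1, k ≥ 0 and s > N be integers and let x > 0 be a real number. Then the (k+1)×(k+1) Hankel matrix with (i,j)-entry (i+j)! · s!/(s−N+i+j)! · x^{i+j}, for 0 ≤ i,j ≤ k, is positive definite. -/
/-!
By the Beta integral, `n! · s!/(s - N + n)! = s!/(s - N - 1)! · ∫₀¹ tⁿ (1 - t)^(s - N - 1) dt`,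
so the matrix is a positive multiple of `D H D`, where `D = diag(xⁱ)` and `H` is the Hankel
matrix of moments of the weight `(1 - t)^(s - N - 1)` on `[0, 1]`. The quadratic form of `H` at
`p ≠ 0` is `∫₀¹ P(t)² (1 - t)^(s - N - 1) dt` with `P = ∑ pᵢ tⁱ` a nonzero polynomial; having only
finitely many roots, `P` is nonzero somewhere in `(0, 1)`, so the integral is positive.
-/

open Finset Polynomial Nat Set Matrix

theorem integral_pow_mul_one_sub_pow (n m : ℕ) :
    ∫ t in (0 : ℝ)..1, t ^ n * (1 - t) ^ m = n ! * m ! / (n + m + 1)! := by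
  have hbeta := Complex.betaIntegral_eq_Gamma_mul_div (n + 1) (m + 1)
    (by simp only [Complex.add_re, Complex.natCast_re, Complex.one_re]; positivity)
    (by simp only [Complex.add_re, Complex.natCast_re, Complex.one_re]; positivity)
  rw [show (n + 1 : ℂ) + (m + 1) = (n + m + 1 : ℕ) + 1 by push_cast; ring,
    Complex.Gamma_nat_eq_factorial, Complex.Gamma_nat_eq_factorial,
    Complex.Gamma_nat_eq_factorial, Complex.betaIntegral] at hbeta
  simp only [add_sub_cancel_right, Complex.cpow_natCast] at hbeta
  rw [← Complex.ofReal_inj, ← intervalIntegral.integral_ofReal]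
  push_cast
  exact hbeta

noncomputable def hankelMomentMatrix (n : ℕ) (a b : ℝ) (w : ℝ → ℝ) : Matrix (Fin n) (Fin n) ℝ :=
  Matrix.of fun i j => ∫ t in a..b, t ^ (i + j : ℕ) * w t

namespace hankelMomentMatrix

variable {n : ℕ} {a b : ℝ} {w : ℝ → ℝ}

theorem isHermitian : (hankelMomentMatrix n a b w).IsHermitian := by
  ext i j
  simp only [hankelMomentMatrix, conjTranspose_apply, of_apply, star_trivial, add_comm]

theorem dotProduct_mulVec (hw : IntervalIntegrable w MeasureTheory.volume a b)
    (p : Fin n → ℝ) :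
    p ⬝ᵥ (hankelMomentMatrix n a b w *ᵥ p) = ∫ t in a..b, (∑ i, p i * t ^ (i : ℕ)) ^ 2 * w t := by
  have hint (i j : Fin n) : IntervalIntegrable (fun t => p i * p j * (t ^ (i + j : ℕ) * w t))
      MeasureTheory.volume a b :=
    (hw.continuousOn_mul (by fun_prop)).const_mul _
  calc p ⬝ᵥ (hankelMomentMatrix n a b w *ᵥ p)
      = ∑ i, ∑ j, ∫ t in a..b, p i * p j * (t ^ (i + j : ℕ) * w t) := by
        simp only [dotProduct, mulVec, hankelMomentMatrix, of_apply, mul_sum,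
          intervalIntegral.integral_const_mul]
        exact sum_congr rfl fun i _ => sum_congr rfl fun j _ => by ring
    _ = ∫ t in a..b, ∑ i, ∑ j, p i * p j * (t ^ (i + j : ℕ) * w t) := by
        have hrow (i : Fin n) : IntervalIntegrable
            (fun t => ∑ j, p i * p j * (t ^ (i + j : ℕ) * w t)) MeasureTheory.volume a b := by
          simpa only [sum_fn] using IntervalIntegrable.sum univ fun j _ => hint i j
        rw [intervalIntegral.integral_finsetSum fun i _ => hrow i]
        exact sum_congr rfl fun i _ => (intervalIntegral.integral_finsetSum fun j _ => hint i j).symm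
    _ = ∫ t in a..b, (∑ i, p i * t ^ (i : ℕ)) ^ 2 * w t := by
        refine intervalIntegral.integral_congr fun t _ => ?_
        rw [sq, sum_mul_sum, sum_mul]
        simp only [sum_mul, pow_add]
        exact sum_congr rfl fun i _ => sum_congr rfl fun j _ => by ring

theorem posDef (hab : a < b) (hw : ContinuousOn w (Icc a b)) (hw_pos : ∀ t ∈ Ioo a b, 0 < w t) :
    (hankelMomentMatrix n a b w).PosDef := by
  classical
  refine .of_dotProduct_mulVec_pos isHermitian fun p hp => ?_
  rw [star_trivial, dotProduct_mulVec (hw.intervalIntegrable_of_Icc hab.le)]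
  set P : ℝ[X] := ofFn n p
  have hP : P ≠ 0 := (map_ne_zero_iff _ (injective_ofFn n)).mpr hp
  have hPeval (t : ℝ) : ∑ i, p i * t ^ (i : ℕ) = P.eval t := by
    simp [P, ofFn_eq_sum_monomial, eval_finsetSum]
  obtain ⟨c, hc, hPc⟩ := ((Ioo_infinite hab).sdiff (finite_setOfPred_isRoot hP)).nonempty
  have hw_nonneg : ∀ t ∈ Icc a b, 0 ≤ w t := by
    rw [← closure_Ioo hab.ne] at hw ⊢
    exact le_on_closure (fun t ht => (hw_pos t ht).le) continuousOn_const hw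
  simp_rw [hPeval]
  refine intervalIntegral.integral_pos hab (by fun_prop) ?_ ⟨c, Ioo_subset_Icc_self hc, ?_⟩
  · exact fun t ht => mul_nonneg (sq_nonneg _) (hw_nonneg t (Ioc_subset_Icc_self ht))
  · exact mul_pos (sq_pos_of_ne_zero hPc) (hw_pos c hc)

end hankelMomentMatrix

theorem hankel_scaled_factorial_posDef_general
    (N k s : ℕ) (hs : N < s) (x : ℝ) (hx : 0 < x) :
    (Matrix.of (fun i j : Fin (k + 1) =>
        (Nat.factorial ((i : ℕ) + (j : ℕ)) : ℝ) *
          ((Nat.factorial s : ℝ) / (Nat.factorial (s - N + (i : ℕ) + (j : ℕ)) : ℝ)) *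
          x ^ ((i : ℕ) + (j : ℕ)))).PosDef := by
  obtain ⟨m, hm⟩ : ∃ m, s - N = m + 1 := ⟨s - N - 1, by omega⟩
  set D := diagonal fun i : Fin (k + 1) => x ^ (i : ℕ)
  have hD : Function.Injective D.mulVec := mulVec_injective_of_isUnit <|
    isUnit_diagonal.mpr <| Pi.isUnit_iff.mpr fun i => (pow_pos hx _).ne'.isUnit
  have hH : (hankelMomentMatrix (k + 1) 0 1 fun t => (1 - t) ^ m).PosDef :=
    hankelMomentMatrix.posDef zero_lt_one (by fun_prop) fun t ht => pow_pos (by linarith [ht.2]) _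
  convert (hH.conjTranspose_mul_mul_same hD).smul (by positivity : (0 : ℝ) < s ! / m !)
  ext i j
  simp only [D, hankelMomentMatrix, hm, integral_pow_mul_one_sub_pow, of_apply, Matrix.smul_apply,
    conjTranspose_eq_transpose_of_trivial, diagonal_transpose, mul_diagonal, diagonal_mul,
    smul_eq_mul]
  rw [show m + 1 + (i : ℕ) + j = i + j + m + 1 by ring, pow_add]
  field_simp

/-- for integers `N ≥ 1`, `k ≥ 0`, `s > N` and real `x > 0`, the Hankel
matrix with entries `(i+j)! · s!/(s−N+i+j)! · x^{i+j}` is positive definite. -/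
theorem hankel_scaled_factorial_posDef
    (N k s : ℕ) (hN : 1 ≤ N) (hs : N < s) (x : ℝ) (hx : 0 < x) :
    (Matrix.of (fun i j : Fin (k + 1) =>
        (Nat.factorial ((i : ℕ) + (j : ℕ)) : ℝ) *
          ((Nat.factorial s : ℝ) / (Nat.factorial (s - N + (i : ℕ) + (j : ℕ)) : ℝ)) *
          x ^ ((i : ℕ) + (j : ℕ)))).PosDef :=
  hankel_scaled_factorial_posDef_general N k s hs x hx
end
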